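/- Let m = 3 and k = 3 (so ξ = exp(2πi/8)). There is no symmetric 3×3 integer matrix R such that τ_R^{(3)} equals the Controlled-Controlled-Z gate CCZ = diag(1, 1, 1, 1, 1, 1, 1, −1), the 8×8 diagonal matrix indexed by v ∈ {0,1}^3 whose (v,v) entry is (−1)^{v_1 v_2 v_3}. -/

import Mathlib

open Complex Matrix

namespace CliffordHierarchy

noncomputable section

variable {ι : Type*} [Fintype ι] [DecidableEq ι]

/-- Embed a binary vector (entries in `ZMod 2`) into ℤ as a 0/1 vector. -/
def toZ (v : ι → ZMod 2) : ι → ℤ := fun i => ((v i).val : ℤ)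

/-- Reduce an integer vector mod 2, viewed in `ZMod 2`. -/
def red2 (a : ι → ℤ) : ι → ZMod 2 := fun i => ((a i : ZMod 2))

/-- Dot product of integer row vectors, over ℤ. -/
def dotZ (x y : ι → ℤ) : ℤ := ∑ i, x i * y i

/-- Bilinear form `x R yᵀ` over ℤ. -/
def bil (R : Matrix ι ι ℤ) (x y : ι → ℤ) : ℤ := ∑ i, ∑ j, x i * R i j * y j

/-- η(v; R, w) = [(v + w) − (v ∗ w)] R (v ∗ w)ᵀ, with ∗ the entrywise product. -/
def eta (R : Matrix ι ι ℤ) (v w : ι → ℤ) : ℤ := bil R (v + w - v * w) (v * w)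

/-- bitwise XOR of 0/1 integer vectors, re-embedded as a 0/1 integer vector. -/
def vxor (v w : ι → ℤ) : ι → ℤ := fun i => v i + w i - 2 * (v i * w i)

/-- ξ_k = exp(2πi/2^k). -/
def xi (k : ℕ) : ℂ := Complex.exp (2 * Real.pi * Complex.I / 2 ^ k)

/-- τ_R^{(k)} = diag(ξ^{v R vᵀ mod 2^k}), indexed by v ∈ {0,1}^m. -/
def tau (k : ℕ) (R : Matrix ι ι ℤ) : Matrix (ι → ZMod 2) (ι → ZMod 2) ℂ :=
  Matrix.diagonal fun v => xi k ^ (bil R (toZ v) (toZ v) % 2 ^ k)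

/-- The Hermitian Pauli matrix E(a,b) extended to integer-vector arguments:
    E(a,b) e_v = i^{a·b mod 4} (−1)^{v·b} e_{v ⊕ a₀}. -/
def EMat (a b : ι → ℤ) : Matrix (ι → ZMod 2) (ι → ZMod 2) ℂ :=
  Matrix.of fun u v =>
    if u = v + red2 a then Complex.I ^ (dotZ a b % 4) * (-1 : ℂ) ^ dotZ (toZ v) b else 0

/-- 0th binary digit vector of a (componentwise `mod 2`). -/
def dig0 (a : ι → ℤ) : ι → ℤ := fun i => a i % 2

/-- 1st binary digit vector of a. -/
def dig1 (a : ι → ℤ) : ι → ℤ := fun i => (a i / 2) % 2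

/-- q^{(k−1)}(v; R, a, b). -/
def qfun (k : ℕ) (R : Matrix ι ι ℤ) (a b v : ι → ℤ) : ℤ :=
  (1 - 2 ^ (k - 2)) * bil R (dig0 a) (dig0 a)
    + 2 ^ (k - 1) * (dotZ (dig0 a) (dig1 b) + dotZ (dig0 b) (dig1 a))
    + (2 + 2 ^ (k - 1)) * bil R v (dig0 a) - 4 * eta R v (dig0 a)


end

/-!
The exponent `v R vᵀ` is a quadratic function of `v`, so its third finite difference vanishes:
the phase of `τ_R` at `e₁ + e₂ + e₃` times those at `e₁`, `e₂`, `e₃` equals the product of the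
phases at `e₁ + e₂`, `e₁ + e₃`, `e₂ + e₃`. For CCZ the first product is `-1`, the second `1`.
-/

section

variable {ι : Type*} [Fintype ι]

lemma bil_add_left (R : Matrix ι ι ℤ) (x y z : ι → ℤ) :
    bil R (x + y) z = bil R x z + bil R y z := by
  simp only [bil, Pi.add_apply, add_mul, Finset.sum_add_distrib]

lemma bil_add_right (R : Matrix ι ι ℤ) (x y z : ι → ℤ) :
    bil R x (y + z) = bil R x y + bil R x z := by
  simp only [bil, Pi.add_apply, mul_add, Finset.sum_add_distrib]

lemma bil_add_add_self (R : Matrix ι ι ℤ) (x y z : ι → ℤ) :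
    bil R (x + y + z) (x + y + z) + bil R x x + bil R y y + bil R z z
      = bil R (x + y) (x + y) + bil R (x + z) (x + z) + bil R (y + z) (y + z) := by
  simp only [bil_add_left, bil_add_right]
  ring

lemma zpow_bil_add_add_self {K : Type*} [DivisionRing K] {ζ : K} (hζ : ζ ≠ 0)
    (R : Matrix ι ι ℤ) (x y z : ι → ℤ) :
    ζ ^ bil R (x + y + z) (x + y + z) * ζ ^ bil R x x * ζ ^ bil R y y * ζ ^ bil R z z
      = ζ ^ bil R (x + y) (x + y) * ζ ^ bil R (x + z) (x + z) * ζ ^ bil R (y + z) (y + z) := by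
  simp only [← zpow_add₀ hζ, bil_add_add_self]

lemma xi_ne_zero (k : ℕ) : xi k ≠ 0 := Complex.exp_ne_zero _

lemma xi_zpow_emod (k : ℕ) (a : ℤ) : xi k ^ (a % 2 ^ k) = xi k ^ a := by
  have hpow : xi k ^ (2 ^ k : ℤ) = 1 := by
    have h := (Complex.isPrimitiveRoot_exp (2 ^ k) (by positivity)).pow_eq_one
    rw [Nat.cast_pow, Nat.cast_ofNat, ← xi] at h
    exact_mod_cast h
  conv_rhs => rw [← Int.emod_add_mul_ediv a (2 ^ k)]
  rw [zpow_add₀ (xi_ne_zero k), _root_.zpow_mul, hpow, _root_.one_zpow, mul_one]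

lemma tau_apply_self (k : ℕ) (R : Matrix ι ι ℤ) (v : ι → ZMod 2) :
    tau k R v v = xi k ^ bil R (toZ v) (toZ v) := by
  rw [tau, diagonal_apply_eq, xi_zpow_emod]

end

theorem stmt10 :
    ¬ ∃ R : Matrix (Fin 3) (Fin 3) ℤ, R.IsSymm ∧
        tau 3 R
          = Matrix.diagonal (fun v : Fin 3 → ZMod 2 =>
              (-1 : ℂ) ^ (toZ v 0 * toZ v 1 * toZ v 2)) := by
  rintro ⟨R, -, hR⟩
  have entry (v : Fin 3 → ZMod 2) :
      xi 3 ^ bil R (toZ v) (toZ v) = (-1 : ℂ) ^ (toZ v 0 * toZ v 1 * toZ v 2) := by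
    rw [← tau_apply_self, hR, diagonal_apply_eq]
  have h := zpow_bil_add_add_self (xi_ne_zero 3) R
    (toZ ![1, 0, 0]) (toZ ![0, 1, 0]) (toZ ![0, 0, 1])
  rw [show toZ ![1, 0, 0] + toZ ![0, 1, 0] + toZ ![0, 0, 1] = toZ ![1, 1, 1] by decide,
    show toZ ![1, 0, 0] + toZ ![0, 1, 0] = toZ ![1, 1, 0] by decide,
    show toZ ![1, 0, 0] + toZ ![0, 0, 1] = toZ ![1, 0, 1] by decide,
    show toZ ![0, 1, 0] + toZ ![0, 0, 1] = toZ ![0, 1, 1] by decide] at h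
  norm_num [entry, toZ, ZMod.val_one, cons_val_two, tail_cons] at h

end CliffordHierarchy
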